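/- Let V be a finite set, B, B' ⊆ V disjoint. For any prescribed reals J_{B∪{j}} for j ∈ B' and any ε > 0, there exist weights w ∈ ℝ^V (with w_i = 0 for i ∉ B ∪ B') and c ∈ ℝ such that the Möbius coefficients K_C(w,c) = ∑_{D ⊆ C} (-1)^{|C\D|} log(1 + exp(∑_{i∈D} w_i + c)) satisfy |K_{B∪{j}}(w,c) − J_{B∪{j}}| ≤ ε for all j ∈ B', and |K_C(w,c)| ≤ ε for every C ⊆ V with C ≠ B and C ∉ {B∪{j} : j ∈ B'}. -/

import Mathlib

open Finset

noncomputable def softplusCoeff {V : Type*} [DecidableEq V]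
    (w : V → ℝ) (c : ℝ) (B : Finset V) : ℝ :=
  ∑ C ∈ B.powerset, (-1 : ℝ) ^ ((B \ C).card) * Real.log (1 + Real.exp (∑ i ∈ C, w i + c))

/-!
Take weights `ω` on `B`, `J` on `B'`, and bias `-(|B| - 1/2) ω`. At `D ⊆ V` the soft-plus is then
evaluated at `(|D ∩ B| - |B| + 1/2) ω + ∑_{D ∩ B'} J`, so as `ω → ∞` it is asymptotically `0` when
`B ⊄ D`, and asymptotically equal to its argument `ω/2 + ∑_{D ∩ B'} J` when `B ⊆ D`, because
`log (1 + eˣ) - x = log (1 + e⁻ˣ)`. This limiting profile is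
`(ω/2)·[B ⊆ D] + ∑_{j ∈ B'} J j·[B ∪ {j} ⊆ D]`, whose Möbius coefficients are
`(ω/2)·[C = B] + ∑_{j ∈ B'} J j·[C = B ∪ {j}]`: away from `C = B` they no longer depend on `ω`.
-/

open Filter Topology

section PowersetMoebius

variable {V R : Type*} [DecidableEq V] [CommRing R]

/-- The Möbius transform on the Boolean lattice of finsets, inverse to `f ↦ (C ↦ ∑ D ⊆ C, f D)`. -/
def powersetMoebius : (Finset V → R) →ₗ[R] Finset V → R where
  toFun f C := ∑ D ∈ C.powerset, (-1) ^ #(C \ D) * f D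
  map_add' f g := by ext C; simp [mul_add, sum_add_distrib]
  map_smul' r f := by ext C; simp [mul_sum, mul_left_comm]

theorem powersetMoebius_apply (f : Finset V → R) (C : Finset V) :
    powersetMoebius f C = ∑ D ∈ C.powerset, (-1) ^ #(C \ D) * f D :=
  rfl

theorem powersetMoebius_eq_zero_of_insert_eq {f : Finset V → R} {C : Finset V} {a : V}
    (ha : a ∈ C) (hf : ∀ T, f (insert a T) = f T) : powersetMoebius f C = 0 := by
  have haC : a ∉ C.erase a := notMem_erase a C
  rw [powersetMoebius_apply, ← insert_erase ha, sum_powerset_insert haC, ← sum_add_distrib]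
  refine sum_eq_zero fun T hT => ?_
  have haT : a ∉ T := fun h => haC (mem_powerset.1 hT h)
  rw [insert_sdiff_insert, sdiff_insert_of_notMem haC, insert_sdiff_of_notMem _ haT,
    card_insert_of_notMem (by simp [haC]), pow_succ, hf]
  ring

def supsetIndicator (A : Finset V) : Finset V → R := fun D => if A ⊆ D then 1 else 0

theorem powersetMoebius_supsetIndicator (A C : Finset V) :
    powersetMoebius (supsetIndicator A : Finset V → R) C = if C = A then 1 else 0 := by
  by_cases hCA : C ⊆ A
  · rw [powersetMoebius_apply, sum_eq_single C]
    · simp [supsetIndicator, subset_antisymm_iff, hCA]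
    · intro D hD hDC
      have : ¬ A ⊆ D := fun h => hDC (subset_antisymm (mem_powerset.1 hD) (hCA.trans h))
      simp [supsetIndicator, this]
    · simp
  · obtain ⟨a, haC, haA⟩ := not_subset.1 hCA
    rw [if_neg (by rintro rfl; exact hCA subset_rfl)]
    exact powersetMoebius_eq_zero_of_insert_eq haC fun T => by
      simp [supsetIndicator, subset_insert_iff_of_notMem haA]

theorem tendsto_powersetMoebius_sub_powersetMoebius [TopologicalSpace R] [IsTopologicalRing R]
    {ι : Type*} {l : Filter ι} {F G : ι → Finset V → R} {C : Finset V}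
    (h : ∀ D ⊆ C, Tendsto (fun x => F x D - G x D) l (𝓝 0)) :
    Tendsto (fun x => powersetMoebius (F x) C - powersetMoebius (G x) C) l (𝓝 0) := by
  simp only [powersetMoebius_apply, ← sum_sub_distrib, ← mul_sub]
  simpa using tendsto_finsetSum _ fun D hD => (h D (mem_powerset.1 hD)).const_mul ((-1) ^ #(C \ D))

end PowersetMoebius

section Softplus

noncomputable def softplus (x : ℝ) : ℝ := Real.log (1 + Real.exp x)

theorem softplus_sub_self (x : ℝ) : softplus x - x = softplus (-x) := by
  have h : 1 + Real.exp x = Real.exp x * (1 + Real.exp (-x)) := by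
    rw [mul_add, ← Real.exp_add, add_neg_cancel, Real.exp_zero, mul_one, add_comm]
  rw [softplus, softplus, h, Real.log_mul (Real.exp_ne_zero x) (by positivity), Real.log_exp,
    add_sub_cancel_left]

theorem tendsto_softplus_atBot : Tendsto softplus atBot (𝓝 0) := by
  have h : Tendsto (fun x => 1 + Real.exp x) atBot (𝓝 1) := by
    simpa using tendsto_const_nhds.add Real.tendsto_exp_atBot
  rw [← Real.log_one]
  exact (Real.continuousAt_log one_ne_zero).tendsto.comp h

theorem tendsto_softplus_sub_self_atTop : Tendsto (fun x => softplus x - x) atTop (𝓝 0) :=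
  (tendsto_softplus_atBot.comp tendsto_neg_atTop_atBot).congr fun x => (softplus_sub_self x).symm

theorem softplusCoeff_eq_powersetMoebius {V : Type*} [DecidableEq V] (w : V → ℝ) (c : ℝ)
    (C : Finset V) :
    softplusCoeff w c C = powersetMoebius (fun D => softplus (∑ i ∈ D, w i + c)) C :=
  rfl

end Softplus

section StarConstruction

variable {V : Type*} [DecidableEq V] (B B' : Finset V) (J : V → ℝ)

noncomputable def starWeights (ω : ℝ) (i : V) : ℝ :=
  (if i ∈ B then ω else 0) + if i ∈ B' then J i else 0

noncomputable def starBias (ω : ℝ) : ℝ := -((#B : ℝ) - 1 / 2) * ω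

noncomputable def starLeading (ω : ℝ) : Finset V → ℝ :=
  (ω / 2) • supsetIndicator B + ∑ j ∈ B', J j • supsetIndicator (insert j B)

theorem sum_starWeights_add_starBias (ω : ℝ) (D : Finset V) :
    ∑ i ∈ D, starWeights B B' J ω i + starBias B ω
      = ((#(D ∩ B) : ℝ) - #B + 1 / 2) * ω + ∑ j ∈ D ∩ B', J j := by
  simp only [starWeights, starBias, sum_add_distrib, sum_ite_mem, sum_const, nsmul_eq_mul]
  ring

theorem starLeading_of_subset {D : Finset V} (hBD : B ⊆ D) (ω : ℝ) :
    starLeading B B' J ω D = ω / 2 + ∑ j ∈ D ∩ B', J j := by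
  simp [starLeading, supsetIndicator, insert_subset_iff, hBD, sum_ite_mem, inter_comm]

theorem starLeading_of_not_subset {D : Finset V} (hBD : ¬ B ⊆ D) (ω : ℝ) :
    starLeading B B' J ω D = 0 := by
  simp [starLeading, supsetIndicator, insert_subset_iff, hBD]

theorem tendsto_softplus_sub_starLeading (D : Finset V) :
    Tendsto (fun ω => softplus (∑ i ∈ D, starWeights B B' J ω i + starBias B ω)
      - starLeading B B' J ω D) atTop (𝓝 0) := by
  simp only [sum_starWeights_add_starBias]
  by_cases hBD : B ⊆ D
  · simp only [starLeading_of_subset B B' J hBD, inter_eq_right.2 hBD]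
    have hhalf : ∀ ω : ℝ, ((#B : ℝ) - #B + 1 / 2) * ω = ω / 2 := fun ω => by ring
    simp only [hhalf]
    exact tendsto_softplus_sub_self_atTop.comp
      (tendsto_atTop_add_const_right _ _ (tendsto_id.atTop_div_const two_pos))
  · simp only [starLeading_of_not_subset B B' J hBD, sub_zero]
    have hslope : (#(D ∩ B) : ℝ) - #B + 1 / 2 < 0 := by
      have hlt : #(D ∩ B) < #B :=
        card_lt_card (inter_subset_right.ssubset_of_ne (mt inter_eq_right.1 hBD))
      have : (#(D ∩ B) : ℝ) + 1 ≤ #B := by exact_mod_cast hlt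
      linarith
    exact tendsto_softplus_atBot.comp
      (tendsto_atBot_add_const_right _ _ (tendsto_id.const_mul_atTop_of_neg hslope))

theorem powersetMoebius_starLeading {C : Finset V} (hCB : C ≠ B) (ω : ℝ) :
    powersetMoebius (starLeading B B' J ω) C = ∑ j ∈ B', if C = insert j B then J j else 0 := by
  simp [starLeading, powersetMoebius_supsetIndicator, hCB]

theorem tendsto_softplusCoeff_starWeights {C : Finset V} (hCB : C ≠ B) :
    Tendsto (fun ω => softplusCoeff (starWeights B B' J ω) (starBias B ω) C) atTop
      (𝓝 (∑ j ∈ B', if C = insert j B then J j else 0)) := by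
  have h := tendsto_powersetMoebius_sub_powersetMoebius (C := C)
    fun D _ => tendsto_softplus_sub_starLeading B B' J D
  simp only [powersetMoebius_starLeading B B' J hCB, tendsto_sub_nhds_zero_iff] at h
  simpa only [softplusCoeff_eq_powersetMoebius] using h

end StarConstruction

theorem star_tuple_lemma
    {V : Type*} [Fintype V] [DecidableEq V]
    (B B' : Finset V) (hdisj : Disjoint B B')
    (J : V → ℝ) (ε : ℝ) (hε : 0 < ε) :
    ∃ (w : V → ℝ) (c : ℝ),
      (∀ i, i ∉ B ∪ B' → w i = 0) ∧
      (∀ j ∈ B', |softplusCoeff w c (insert j B) - J j| ≤ ε) ∧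
      (∀ C : Finset V, C ≠ B → (∀ j ∈ B', C ≠ insert j B) →
        |softplusCoeff w c C| ≤ ε) := by
  have hclose : ∀ᶠ ω in atTop, ∀ C : Finset V, C ≠ B →
      |softplusCoeff (starWeights B B' J ω) (starBias B ω) C
        - ∑ j ∈ B', if C = insert j B then J j else 0| ≤ ε := by
    refine eventually_all.2 fun C => ?_
    by_cases hCB : C = B
    · exact .of_forall fun _ h => absurd hCB h
    · filter_upwards [(tendsto_softplusCoeff_starWeights B B' J hCB).eventually
        (Metric.closedBall_mem_nhds _ hε)] with ω hω _
      exact hω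
  obtain ⟨ω, hω⟩ := hclose.exists
  refine ⟨starWeights B B' J ω, starBias B ω, fun i hi => ?_, fun k hk => ?_, fun C hCB hC => ?_⟩
  · simp only [mem_union, not_or] at hi
    simp [starWeights, hi.1, hi.2]
  · have hkB : k ∉ B := disjoint_right.1 hdisj hk
    simpa only [insert_inj hkB, sum_ite_eq, if_pos hk] using hω (insert k B) (by simpa using hkB)
  · simpa only [sum_eq_zero fun j hj => if_neg (hC j hj), sub_zero] using hω C hCB
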